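/- arXiv:1807.02248 — 2 statements merged into one kernel-verified Lean document; each statement's English description precedes it below -/
import Mathlib

section
/- Lemma 1, part 2 (kernel bias bounds). Let ΔX^s_{it} = (Λ_i(S_t) − Λ_i(s))ᵀ F^s_t with F^s_t = K_s(S_t)^{1/2} F_t. Under the state and kernel Assumption A2, the factor Assumption A3 and the loading Assumption A4, as h → 0 and Th → ∞: (1/N) Σ_{i=1}^N (ΔX^s_{it})² = O_p(h) for each t, and (1/T(s)) Σ_{t=1}^T (ΔX^s_{it})² = O_p(h²) for each i. -/
open MeasureTheory ProbabilityTheory Filter Matrix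
open scoped BigOperators Topology NNReal

noncomputable section

namespace SVFM

variable {Ω : Type*} [MeasurableSpace Ω]

/-- `Z n = O_p(a n)` : the family `Z n / a n` is uniformly tight (bounded in probability):
for every `ε > 0` there is `M < ∞` with `P(|Z n| > M |a n|) < ε` for all large `n`. -/
def IsOp (μ : Measure Ω) (Z : ℕ → Ω → ℝ) (a : ℕ → ℝ) : Prop :=
  ∀ ε : ℝ, 0 < ε → ∃ M : ℝ, ∀ᶠ n in atTop,
    (μ {ω | M * |a n| < |Z n ω|}).toReal < ε

/-- convergence in probability to the constant `c`. -/
def TendstoP (μ : Measure Ω) (Z : ℕ → Ω → ℝ) (c : ℝ) : Prop :=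
  ∀ ε : ℝ, 0 < ε →
    Tendsto (fun n => (μ {ω | ε ≤ |Z n ω - c|}).toReal) atTop (𝓝 0)

/-- convergence in distribution of real random variables, via bounded continuous test
functions. -/
def TendstoD (μ : Measure Ω) (Z : ℕ → Ω → ℝ) (ν : Measure ℝ) : Prop :=
  ∀ f : BoundedContinuousFunction ℝ ℝ,
    Tendsto (fun n => ∫ ω, f (Z n ω) ∂μ) atTop (𝓝 (∫ x, f x ∂ν))

/-- convergence in distribution to a centered Gaussian vector with covariance matrix `C`,
in the Cramér–Wold formulation. -/
def TendstoGaussian {ι : Type*} [Fintype ι] (μ : Measure Ω)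
    (Z : ℕ → Ω → ι → ℝ) (C : Matrix ι ι ℝ) : Prop :=
  ∀ v : ι → ℝ,
    TendstoD μ (fun n ω => ∑ k, v k * Z n ω k)
      (gaussianReal 0 (Real.toNNReal (∑ k, ∑ l, v k * C k l * v l)))

/-- Data of a large-dimensional state-varying factor model
`X_{it} = Λ_i(S_t)ᵀ F_t + e_{it}`, along a joint asymptotic index `n ↦ (N n, T n, h n)`. -/
structure Core (Ω : Type*) [MeasurableSpace Ω] (r : ℕ) where
  /-- the underlying probability measure -/
  μ : Measure Ω
  /-- cross-sectional dimension -/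
  N : ℕ → ℕ
  /-- time-series dimension -/
  T : ℕ → ℕ
  /-- kernel bandwidth -/
  h : ℕ → ℝ
  /-- kernel function -/
  K : ℝ → ℝ
  /-- state process -/
  S : ℕ → Ω → ℝ
  /-- latent factors -/
  F : ℕ → Ω → Fin r → ℝ
  /-- loading functions of the state -/
  Λ : ℕ → ℝ → Fin r → ℝ
  /-- idiosyncratic errors -/
  e : ℕ → ℕ → Ω → ℝ
  /-- stationary density of the state process -/
  statden : ℝ → ℝ
  /-- unconditional second moment of the factors -/
  SigF : Matrix (Fin r) (Fin r) ℝ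

namespace Core

variable {r : ℕ} (C : Core Ω r)

/-- the observed panel -/
def X (i t : ℕ) (ω : Ω) : ℝ := (∑ k, C.Λ i (C.S t ω) k * C.F t ω k) + C.e i t ω

/-- kernel weight `K_s(S_t) = h⁻¹ K((S_t - s)/h)` -/
def Kw (s : ℝ) (n t : ℕ) (ω : Ω) : ℝ := (C.h n)⁻¹ * C.K ((C.S t ω - s) / C.h n)

/-- effective sample size `T(s) = Σ_t K_s(S_t)` -/
def Ts (s : ℝ) (n : ℕ) (ω : Ω) : ℝ := ∑ t ∈ Finset.range (C.T n), C.Kw s n t ω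

/-- projected data `X^s_{it} = K_s(S_t)^{1/2} X_{it}` -/
def Xs (s : ℝ) (n i t : ℕ) (ω : Ω) : ℝ := Real.sqrt (C.Kw s n t ω) * C.X i t ω

/-- projected factors `F^s_t = K_s(S_t)^{1/2} F_t` -/
def Fs (s : ℝ) (n t : ℕ) (ω : Ω) (k : Fin r) : ℝ := Real.sqrt (C.Kw s n t ω) * C.F t ω k

/-- projected errors `e^s_{it} = K_s(S_t)^{1/2} e_{it}` -/
def es (s : ℝ) (n i t : ℕ) (ω : Ω) : ℝ := Real.sqrt (C.Kw s n t ω) * C.e i t ω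

/-- the convergence rate `δ_{NT,h} = min(√N, √(Th))` -/
def δ (n : ℕ) : ℝ := min (Real.sqrt (C.N n)) (Real.sqrt ((C.T n : ℝ) * C.h n))

/-- (cross-state) loading Gram matrix `Λ(s₁)ᵀΛ(s₂)/N` -/
def GramΛ (n : ℕ) (s₁ s₂ : ℝ) : Matrix (Fin r) (Fin r) ℝ :=
  Matrix.of fun k l =>
    (C.N n : ℝ)⁻¹ * ∑ i ∈ Finset.range (C.N n), C.Λ i s₁ k * C.Λ i s₂ l

/-- kernel bias term `ΔX^s_{it} = (Λ_i(S_t) - Λ_i(s))ᵀ F^s_t` -/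
def ΔXs (s : ℝ) (n i t : ℕ) (ω : Ω) : ℝ :=
  ∑ k, (C.Λ i (C.S t ω) k - C.Λ i s k) * C.Fs s n t ω k

/-- the σ-algebra generated by the state process -/
def stateFiltration : MeasurableSpace Ω :=
  ⨆ t : ℕ, MeasurableSpace.comap (C.S t) inferInstance

/-- the σ-algebra generated by an error array -/
def errorSigma (u : ℕ → ℕ → Ω → ℝ) : MeasurableSpace Ω :=
  ⨆ p : ℕ × ℕ, MeasurableSpace.comap (fun ω => u p.1 p.2 ω) inferInstance

/-- `γ_N(t,t') = E[e_tᵀ e_{t'} / N]` -/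
def gammaN (u : ℕ → ℕ → Ω → ℝ) (n t t' : ℕ) : ℝ :=
  (C.N n : ℝ)⁻¹ * ∑ i ∈ Finset.range (C.N n), ∫ ω, u i t ω * u i t' ω ∂C.μ

/-- `γ_{N,F}(t,t') = E[F_{t'} e_{t'}ᵀ e_t / N]` -/
def gammaNF (u : ℕ → ℕ → Ω → ℝ) (n t t' : ℕ) (k : Fin r) : ℝ :=
  ∫ ω, C.F t' ω k *
    ((C.N n : ℝ)⁻¹ * ∑ i ∈ Finset.range (C.N n), u i t' ω * u i t ω) ∂C.μ

/-- a version of `E[F_{t'} e_{t'}ᵀ e_t / N | S_t, S_{t'}]` -/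
def cgammaNF (u : ℕ → ℕ → Ω → ℝ) (n t t' : ℕ) (k : Fin r) (ω : Ω) : ℝ :=
  MeasureTheory.condExp
    (MeasurableSpace.comap (fun ω' => (C.S t ω', C.S t' ω')) inferInstance) C.μ
    (fun ω' => C.F t' ω' k *
      ((C.N n : ℝ)⁻¹ * ∑ i ∈ Finset.range (C.N n), u i t' ω' * u i t ω')) ω

/-- Basic regularity: probability space, positive bandwidth, measurability. -/
def Basic : Prop :=
  IsProbabilityMeasure C.μ ∧ (∀ n, 0 < C.h n) ∧
  (∀ t, Measurable (C.S t)) ∧ (∀ t k, Measurable fun ω => C.F t ω k) ∧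
  (∀ i t, Measurable fun ω => C.e i t ω) ∧ Measurable C.K ∧
  (∀ i k, Measurable fun x => C.Λ i x k)

/-- Assumption A1 (identification): the conditional second moment of the factors given the
state does not depend on the state and equals the unconditional one, `Σ_F`, positive
definite. Conditional moments are expressed through test functions of the state. -/
def A1 : Prop :=
  C.SigF.PosDef ∧
  (∀ t k l, ∫ ω, C.F t ω k * C.F t ω l ∂C.μ = C.SigF k l) ∧
  (∀ t (k l : Fin r), ∀ φ : BoundedContinuousFunction ℝ ℝ,
    ∫ ω, C.F t ω k * C.F t ω l * φ (C.S t ω) ∂C.μ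
      = C.SigF k l * ∫ ω, φ (C.S t ω) ∂C.μ)

/-- Assumption A2 (state process and kernel): the state process is observed and positive
recurrent with stationary density `statden`, continuous with bounded first derivative; the
kernel is symmetric, continuously differentiable, nonnegative, compactly supported, with
finite fourth moment. Positive recurrence is formalized by stationarity of the marginals
plus a law of large numbers for time averages of bounded continuous functions. -/
def A2 : Prop :=
  (∀ t, C.μ.map (C.S t) = volume.withDensity fun x => ENNReal.ofReal (C.statden x)) ∧
  (∀ x, 0 ≤ C.statden x) ∧ Continuous C.statden ∧ Differentiable ℝ C.statden ∧
  (∃ Cd : ℝ, ∀ x, |deriv C.statden x| ≤ Cd) ∧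
  (∀ φ : BoundedContinuousFunction ℝ ℝ,
    TendstoP C.μ
      (fun n ω => (C.T n : ℝ)⁻¹ * ∑ t ∈ Finset.range (C.T n), φ (C.S t ω))
      (∫ x, φ x * C.statden x)) ∧
  (∀ u, C.K (-u) = C.K u) ∧ ContDiff ℝ 1 C.K ∧ (∀ u, 0 ≤ C.K u) ∧
  HasCompactSupport C.K ∧ (∫ u, C.K u = 1) ∧ MeasureTheory.Integrable (fun u => u ^ 4 * C.K u)

end Core

/-- State-specific data: the state value `s` we condition on, the limiting conditional
moment matrices, the spectral data of `Σ_{Λ(s)}^{1/2} Σ_{F|s} Σ_{Λ(s)}^{1/2}`, and the PCA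
estimators (projected factors `F̂^s` and the diagonal `V^s_r` of top eigenvalues). -/
structure StateData (Ω : Type*) [MeasurableSpace Ω] (r : ℕ) where
  /-- the conditioning state value -/
  s : ℝ
  /-- conditional second moment `Σ_{F|s}` of the factors -/
  SigFs : Matrix (Fin r) (Fin r) ℝ
  /-- limit loading Gram matrix `Σ_{Λ(s)}` -/
  SigL : Matrix (Fin r) (Fin r) ℝ
  /-- a symmetric positive definite square root of `Σ_{Λ(s)}` -/
  SigLsqrt : Matrix (Fin r) (Fin r) ℝ
  /-- eigenvalues `v₁ > ⋯ > v_r > 0` of `Σ_{Λ(s)}^{1/2} Σ_{F|s} Σ_{Λ(s)}^{1/2}` -/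
  Vlim : Fin r → ℝ
  /-- orthonormal eigenvector matrix `Υ^s` -/
  Ups : Matrix (Fin r) (Fin r) ℝ
  /-- the estimated projected factors `F̂^s_t` -/
  Fhat : ℕ → ℕ → Ω → Fin r → ℝ
  /-- the diagonal of `V^s_r` : the `r` largest eigenvalues of `(NT(s))⁻¹ (X^s)ᵀX^s` -/
  Veig : ℕ → Ω → Fin r → ℝ

namespace StateData

variable {r : ℕ} (C : Core Ω r) (D : StateData Ω r)

/-- the loading estimator `Λ̂(s) = X^s F̂^s / T(s)` -/
def Lhat (n i : ℕ) (ω : Ω) (k : Fin r) : ℝ :=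
  (C.Ts D.s n ω)⁻¹ * ∑ t ∈ Finset.range (C.T n), C.Xs D.s n i t ω * D.Fhat n t ω k

/-- `(F^s)ᵀ F̂^s / T(s)` -/
def FsFhat (n : ℕ) (ω : Ω) : Matrix (Fin r) (Fin r) ℝ :=
  Matrix.of fun k l =>
    (C.Ts D.s n ω)⁻¹ * ∑ t ∈ Finset.range (C.T n), C.Fs D.s n t ω k * D.Fhat n t ω l

/-- `(F̂^s)ᵀ F^s / T(s)` -/
def FhatFs (n : ℕ) (ω : Ω) : Matrix (Fin r) (Fin r) ℝ :=
  Matrix.of fun k l =>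
    (C.Ts D.s n ω)⁻¹ * ∑ t ∈ Finset.range (C.T n), D.Fhat n t ω k * C.Fs D.s n t ω l

/-- the rotation matrix `H^s = (Λ(s)ᵀΛ(s)/N) ((F^s)ᵀF̂^s/T(s)) (V^s_r)⁻¹` -/
def H (n : ℕ) (ω : Ω) : Matrix (Fin r) (Fin r) ℝ :=
  C.GramΛ n D.s D.s * D.FsFhat C n ω * Matrix.diagonal (fun l => (D.Veig n ω l)⁻¹)

/-- the limit matrix `Q^s = (V^s)^{1/2} (Υ^s)ᵀ Σ_{Λ(s)}^{-1/2}` -/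
def Q : Matrix (Fin r) (Fin r) ℝ :=
  Matrix.diagonal (fun k => Real.sqrt (D.Vlim k)) * D.Upsᵀ * (D.SigLsqrt)⁻¹

/-- the unprojected factor estimator `F̂_t = F̂^s_t / K_s(S_t)^{1/2}` -/
def FhatU (n t : ℕ) (ω : Ω) (k : Fin r) : ℝ :=
  D.Fhat n t ω k / Real.sqrt (C.Kw D.s n t ω)

/-- Assumption A3 (conditional factors): bounded fourth moments of the factors,
unconditionally and conditionally on the state filtration, and convergence in probability
of the kernel-weighted factor second moment to the positive definite `Σ_{F|s}`. -/
def A3 : Prop :=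
  (∃ Fbar : ℝ,
    (∀ t, ∫ ω, (∑ k, (C.F t ω k) ^ 2) ^ 2 ∂C.μ ≤ Fbar) ∧
    (∀ t, ∀ᵐ ω ∂C.μ,
      MeasureTheory.condExp C.stateFiltration C.μ
        (fun ω' => (∑ k, (C.F t ω' k) ^ 2) ^ 2) ω ≤ Fbar)) ∧
  (∀ k l : Fin r,
    TendstoP C.μ
      (fun n ω => (C.Ts D.s n ω)⁻¹ *
        ∑ t ∈ Finset.range (C.T n), C.Kw D.s n t ω * C.F t ω k * C.F t ω l)
      (D.SigFs k l)) ∧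
  D.SigFs.PosDef

/-- Assumption A4 (factor loadings): the loading Gram matrix at `s` converges to a positive
definite limit, and the loadings are Lipschitz in the state uniformly over the
cross-section. -/
def A4 : Prop :=
  (∀ k l : Fin r, Tendsto (fun n => C.GramΛ n D.s D.s k l) atTop (𝓝 (D.SigL k l))) ∧
  D.SigL.PosDef ∧
  (∃ CL : ℝ, ∀ i x y k, |C.Λ i x k - C.Λ i y k| ≤ CL * |x - y|)

/-- Assumption A7 together with the spectral bookkeeping: `Σ_{Λ(s)}^{1/2}` is a symmetric
positive definite square root of `Σ_{Λ(s)}`, `Υ^s` is the orthonormal eigenvector matrix of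
`Σ_{Λ(s)}^{1/2} Σ_{F|s} Σ_{Λ(s)}^{1/2}` with strictly decreasing positive eigenvalues
`V^s`; in particular the eigenvalues of `Σ_{Λ(s)} Σ_{F|s}` are distinct. -/
def A7 : Prop :=
  D.SigLsqrtᵀ = D.SigLsqrt ∧ D.SigLsqrt * D.SigLsqrt = D.SigL ∧ D.SigLsqrt.PosDef ∧
  D.Upsᵀ * D.Ups = 1 ∧
  D.SigLsqrt * D.SigFs * D.SigLsqrt * D.Ups = D.Ups * Matrix.diagonal D.Vlim ∧
  (∀ k, 0 < D.Vlim k) ∧ StrictAnti D.Vlim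

/-- the defining properties of the PCA estimator: almost surely, `F̂^s` is orthonormal after
normalization by `T(s)`, its columns are eigenvectors of `(NT(s))⁻¹ (X^s)ᵀX^s` with
eigenvalues the decreasing nonnegative diagonal of `V^s_r`, and it maximizes the explained
variation among all such normalized `T × r` matrices (so it spans the top-`r`
eigenspace). -/
def IsPCA : Prop :=
  ∀ n, ∀ᵐ ω ∂C.μ,
    (∀ k l : Fin r,
      (C.Ts D.s n ω)⁻¹ * ∑ t ∈ Finset.range (C.T n), D.Fhat n t ω k * D.Fhat n t ω l
        = if k = l then (1 : ℝ) else 0) ∧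
    (∀ t ∈ Finset.range (C.T n), ∀ k : Fin r,
      ((C.N n : ℝ) * C.Ts D.s n ω)⁻¹ *
        ∑ t' ∈ Finset.range (C.T n),
          (∑ i ∈ Finset.range (C.N n), C.Xs D.s n i t ω * C.Xs D.s n i t' ω) *
            D.Fhat n t' ω k
        = D.Veig n ω k * D.Fhat n t ω k) ∧
    (∀ k l : Fin r, k ≤ l → D.Veig n ω l ≤ D.Veig n ω k) ∧
    (∀ k : Fin r, 0 ≤ D.Veig n ω k) ∧
    (∀ G : ℕ → Fin r → ℝ,
      (∀ k l : Fin r,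
        (C.Ts D.s n ω)⁻¹ * ∑ t ∈ Finset.range (C.T n), G t k * G t l
          = if k = l then (1 : ℝ) else 0) →
      (∑ k : Fin r, ((C.N n : ℝ) * C.Ts D.s n ω)⁻¹ *
          ∑ t ∈ Finset.range (C.T n), ∑ t' ∈ Finset.range (C.T n),
            (∑ i ∈ Finset.range (C.N n), C.Xs D.s n i t ω * C.Xs D.s n i t' ω) *
              G t k * G t' k)
        ≤ ∑ k : Fin r, ((C.N n : ℝ) * C.Ts D.s n ω)⁻¹ *
          ∑ t ∈ Finset.range (C.T n), ∑ t' ∈ Finset.range (C.T n),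
            (∑ i ∈ Finset.range (C.N n), C.Xs D.s n i t ω * C.Xs D.s n i t' ω) *
              D.Fhat n t ω k * D.Fhat n t' ω k)

end StateData

namespace Core

variable {r : ℕ} (C : Core Ω r)

/-- the weak dependence part of Assumption A5 (parts 2–5 of Assumption 4 of the paper),
for a generic error array `u`. -/
def WeakDep (u : ℕ → ℕ → Ω → ℝ) : Prop :=
  ∃ M0 : ℝ,
    (∀ n t t', |C.gammaN u n t t'| ≤ M0) ∧
    (∀ n t, ∑ t' ∈ Finset.range (C.T n), |C.gammaN u n t t'| ≤ M0) ∧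
    (∃ τ : ℕ → ℕ → ℝ,
      (∀ i l t, |∫ ω, u i t ω * u l t ω ∂C.μ| ≤ |τ i l|) ∧
      (∀ n i, ∑ l ∈ Finset.range (C.N n), |τ i l| ≤ M0)) ∧
    (∀ n, ((C.N n : ℝ) * (C.T n : ℝ))⁻¹ *
      ∑ i ∈ Finset.range (C.N n), ∑ l ∈ Finset.range (C.N n),
        ∑ t ∈ Finset.range (C.T n), ∑ t' ∈ Finset.range (C.T n),
          |∫ ω, u i t ω * u l t' ω ∂C.μ| ≤ M0) ∧
    (∀ n t t', ∫ ω, ((Real.sqrt (C.N n))⁻¹ *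
      ∑ i ∈ Finset.range (C.N n),
        (u i t ω * u i t' ω - ∫ ω', u i t ω' * u i t' ω' ∂C.μ)) ^ 4 ∂C.μ ≤ M0)

/-- the factor–error weak dependence part of Assumption A5 (part 6 of Assumption 4 of the
paper), unconditionally and conditionally on the state. -/
def FactorErrorDep (u : ℕ → ℕ → Ω → ℝ) : Prop :=
  ∃ M0 : ℝ,
    (∀ n t, (∑ k, |C.gammaNF u n t t k|) ≤ M0) ∧
    (∀ n t, ∑ t' ∈ Finset.range (C.T n), (∑ k, |C.gammaNF u n t t' k|) ≤ M0) ∧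
    (∀ n t', ∑ t ∈ Finset.range (C.T n), (∑ k, |C.gammaNF u n t t' k|) ≤ M0) ∧
    (∀ n t, ∀ᵐ ω ∂C.μ, (∑ k, |C.cgammaNF u n t t k ω|) ≤ M0) ∧
    (∀ n t, ∀ᵐ ω ∂C.μ,
      ∑ t' ∈ Finset.range (C.T n), (∑ k, |C.cgammaNF u n t t' k ω|) ≤ M0) ∧
    (∀ n t', ∀ᵐ ω ∂C.μ,
      ∑ t ∈ Finset.range (C.T n), (∑ k, |C.cgammaNF u n t t' k ω|) ≤ M0)

/-- Assumption A5 (Assumption 4 of the paper) for a generic error array `u`: mean zero,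
bounded eighth moments, independence of the state process, weak time-series,
cross-sectional and total dependence, bounded fourth-moment cross-sectional correlation,
and weak dependence between factors and errors. -/
def A5 (u : ℕ → ℕ → Ω → ℝ) : Prop :=
  (∀ i t, ∫ ω, u i t ω ∂C.μ = 0) ∧
  (∃ M0 : ℝ, ∀ i t, ∫ ω, (u i t ω) ^ 8 ∂C.μ ≤ M0) ∧
  ProbabilityTheory.Indep (Core.errorSigma u) C.stateFiltration C.μ ∧
  C.WeakDep u ∧ C.FactorErrorDep u

end Core

namespace StateData

variable {r : ℕ} (C : Core Ω r) (D : StateData Ω r)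

/-- Assumption A6 (Assumption 5 of the paper): kernel-weighted moment bounds and central
limit theorems, for a generic error array `u`, with limiting covariance matrices `Γ_t^s`
(loadings and errors) and `Φ_i^s` (projected factors and errors). -/
def A6 (u : ℕ → ℕ → Ω → ℝ)
    (Γ : ℕ → Matrix (Fin r) (Fin r) ℝ) (Φ : ℕ → Matrix (Fin r) (Fin r) ℝ) : Prop :=
  (∃ M0 : ℝ, ∀ n t, ∫ ω,
      (∑ k, (Real.sqrt ((C.T n : ℝ) * C.h n / C.N n) * (C.Ts D.s n ω)⁻¹ *
        ∑ t' ∈ Finset.range (C.T n), ∑ i ∈ Finset.range (C.N n),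
          C.Kw D.s n t' ω * C.F t' ω k *
            (u i t' ω * u i t ω - ∫ ω', u i t' ω' * u i t ω' ∂C.μ)) ^ 2) ∂C.μ ≤ M0) ∧
  (∃ M0 : ℝ, ∀ n, ∫ ω,
      (∑ k, ∑ l, (Real.sqrt ((C.T n : ℝ) * C.h n / C.N n) * (C.Ts D.s n ω)⁻¹ *
        ∑ t ∈ Finset.range (C.T n), ∑ i ∈ Finset.range (C.N n),
          C.Kw D.s n t ω * C.F t ω k * C.Λ i D.s l * u i t ω) ^ 2) ∂C.μ ≤ M0) ∧
  (∀ t, TendstoGaussian C.μ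
      (fun n ω k => (Real.sqrt (C.N n))⁻¹ *
        ∑ i ∈ Finset.range (C.N n), C.Λ i D.s k * u i t ω) (Γ t)) ∧
  (∀ t (k l : Fin r), Tendsto (fun n => (C.N n : ℝ)⁻¹ *
      ∑ i ∈ Finset.range (C.N n), ∑ j ∈ Finset.range (C.N n),
        C.Λ i D.s k * C.Λ j D.s l * ∫ ω, u i t ω * u j t ω ∂C.μ)
      atTop (𝓝 (Γ t k l))) ∧
  (∀ i, TendstoGaussian C.μ
      (fun n ω k => Real.sqrt ((C.T n : ℝ) * C.h n) * (C.Ts D.s n ω)⁻¹ *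
        ∑ t ∈ Finset.range (C.T n), C.Kw D.s n t ω * C.F t ω k * u i t ω) (Φ i)) ∧
  (∃ M0 : ℝ, ∀ n i, ∫ ω,
      (∑ k, (Real.sqrt ((C.T n : ℝ) * C.h n / C.N n) * (C.Ts D.s n ω)⁻¹ *
        ∑ t ∈ Finset.range (C.T n), ∑ l ∈ Finset.range (C.N n),
          C.Kw D.s n t ω * C.Λ l D.s k *
            (u l t ω * u i t ω - ∫ ω', u l t ω' * u i t ω' ∂C.μ)) ^ 2) ∂C.μ ≤ M0)

end StateData


/-!
### Statement 6: Lemma 1, part 2 (kernel bias bounds)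

Let `ΔX^s_{it} = (Λ_i(S_t) − Λ_i(s))ᵀ F^s_t` with `F^s_t = K_s(S_t)^{1/2} F_t`. Under the
state/kernel Assumption A2, the factor Assumption A3 and the loading Assumption A4, as
`h → 0` and `Th → ∞`: `(1/N) Σ_i (ΔX^s_{it})² = O_p(h)` for each `t`, and
`(1/T(s)) Σ_t (ΔX^s_{it})² = O_p(h²)` for each `i`.
-/
/-- For a measurable real function on a probability space, the tail probability
`μ {ω | M < g ω}` can be made arbitrarily small. -/
private lemma tail_small {Ω : Type*} [MeasurableSpace Ω] (μ : Measure Ω)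
    [IsProbabilityMeasure μ] (g : Ω → ℝ) (hg : Measurable g) {ε : ℝ} (hε : 0 < ε) :
    ∃ M : ℝ, (μ {ω | M < g ω}).toReal < ε := by
  have hanti : Antitone (fun j : ℕ => {ω | (j : ℝ) < g ω}) := by
    intro a b hab ω hω
    have : (a : ℝ) ≤ (b : ℝ) := by exact_mod_cast hab
    exact lt_of_le_of_lt this hω
  have hmeas : ∀ j : ℕ, MeasurableSet {ω | (j : ℝ) < g ω} :=
    fun j => measurableSet_lt measurable_const hg
  have hI : (⋂ j : ℕ, {ω | (j : ℝ) < g ω}) = ∅ := by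
    ext ω
    simp only [Set.mem_iInter, Set.mem_setOf_eq, Set.mem_empty_iff_false, iff_false, not_forall,
      not_lt]
    obtain ⟨j, hj⟩ := exists_nat_ge (g ω)
    exact ⟨j, hj⟩
  have htd : Tendsto (fun j : ℕ => μ {ω | (j : ℝ) < g ω}) atTop (𝓝 0) := by
    have := tendsto_measure_iInter_atTop (μ := μ)
      (fun j => (hmeas j).nullMeasurableSet) hanti ⟨0, measure_ne_top _ _⟩
    rwa [hI, measure_empty] at this
  have := htd.eventually_lt_const (show (0 : ENNReal) < ENNReal.ofReal ε from
    ENNReal.ofReal_pos.2 hε)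
  obtain ⟨j, hj⟩ := this.exists
  exact ⟨(j : ℝ), ENNReal.toReal_lt_of_lt_ofReal hj⟩

theorem kernel_bias_bounds {Ω : Type*} [MeasurableSpace Ω] {r : ℕ}
    (C : Core Ω r) (D : StateData Ω r)
    (hBasic : C.Basic) (hdens : 0 < C.statden D.s)
    (hA2 : C.A2) (hA3 : D.A3 C) (hA4 : D.A4 C)
    (hh : Tendsto C.h atTop (𝓝 0))
    (hTh : Tendsto (fun n => (C.T n : ℝ) * C.h n) atTop atTop) :
    (∀ t : ℕ,
      IsOp C.μ
        (fun n ω => (C.N n : ℝ)⁻¹ *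
          ∑ i ∈ Finset.range (C.N n), (C.ΔXs D.s n i t ω) ^ 2)
        (fun n => C.h n)) ∧
    (∀ i : ℕ,
      IsOp C.μ
        (fun n ω => (C.Ts D.s n ω)⁻¹ *
          ∑ t ∈ Finset.range (C.T n), (C.ΔXs D.s n i t ω) ^ 2)
        (fun n => (C.h n) ^ 2)) := by
  obtain ⟨hprob, hhpos, hSmeas, hFmeas, hemeas, hKmeas, hLmeas⟩ := hBasic
  haveI := hprob
  obtain ⟨-, -, -, -, -, -, -, hKC1, hK0, hKcs, -, -⟩ := hA2
  obtain ⟨-, -, ⟨CL0, hLip0⟩⟩ := hA4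
  -- Lipschitz constant (nonnegative version)
  set CL : ℝ := |CL0| with hCLdef
  have hCL0 : 0 ≤ CL := abs_nonneg _
  have hLip : ∀ i x y k, |C.Λ i x k - C.Λ i y k| ≤ CL * |x - y| := by
    intro i x y k
    exact (hLip0 i x y k).trans (mul_le_mul_of_nonneg_right (le_abs_self _) (abs_nonneg _))
  -- support radius of the kernel
  obtain ⟨R0, hR0⟩ := (Metric.isBounded_iff_subset_closedBall 0).1 hKcs.isBounded
  set R : ℝ := max R0 0 with hRdef
  have hR : 0 ≤ R := le_max_right _ _
  have hKzero : ∀ u, R < |u| → C.K u = 0 := by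
    intro u hu
    by_contra hne
    have : u ∈ tsupport C.K := subset_tsupport _ hne
    have := hR0 this
    rw [Metric.mem_closedBall, Real.dist_eq, sub_zero] at this
    exact absurd (this.trans (le_max_left _ _)) (not_le.2 hu)
  -- kernel bound
  obtain ⟨Kb, hKb⟩ := hKcs.exists_bound_of_continuous hKC1.continuous
  set Kmax : ℝ := max Kb 0 with hKmaxdef
  have hKmax0 : 0 ≤ Kmax := le_max_right _ _
  have hKle : ∀ u, C.K u ≤ Kmax := fun u =>
    ((le_abs_self _).trans ((Real.norm_eq_abs _ ▸ hKb u).trans (le_max_left _ _)))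
  have hKw0 : ∀ n t ω, 0 ≤ C.Kw D.s n t ω := fun n t ω =>
    mul_nonneg (inv_nonneg.2 (hhpos n).le) (hK0 _)
  set c : ℝ := (r : ℝ) * CL ^ 2 * R ^ 2 with hcdef
  have hc0 : 0 ≤ c := by positivity
  -- key pointwise bound
  have hkey : ∀ n i t ω, (C.ΔXs D.s n i t ω) ^ 2 ≤
      c * (C.h n) ^ 2 * (C.Kw D.s n t ω * ∑ k, (C.F t ω k) ^ 2) := by
    intro n i t ω
    set w : ℝ := C.Kw D.s n t ω with hwdef
    have hw0 : 0 ≤ w := hKw0 n t ω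
    have hΔ : C.ΔXs D.s n i t ω =
        ∑ k, (C.Λ i (C.S t ω) k - C.Λ i D.s k) * (Real.sqrt w * C.F t ω k) := rfl
    by_cases hwz : w = 0
    · rw [hΔ]
      simp [hwz]
    · have hKne : C.K ((C.S t ω - D.s) / C.h n) ≠ 0 := by
        intro h0
        exact hwz (by rw [hwdef]; unfold Core.Kw; rw [h0, mul_zero])
      have habs : |C.S t ω - D.s| ≤ R * C.h n := by
        have h1 : ¬ R < |(C.S t ω - D.s) / C.h n| := fun h => hKne (hKzero _ h)
        rw [not_lt, abs_div, abs_of_pos (hhpos n), div_le_iff₀ (hhpos n)] at h1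
        exact h1
      have hCS := Finset.sum_mul_sq_le_sq_mul_sq Finset.univ
        (fun k => C.Λ i (C.S t ω) k - C.Λ i D.s k) (fun k => Real.sqrt w * C.F t ω k)
      rw [hΔ]
      have h2 : (∑ k, (Real.sqrt w * C.F t ω k) ^ 2) = w * ∑ k, (C.F t ω k) ^ 2 := by
        rw [Finset.mul_sum]
        refine Finset.sum_congr rfl fun k _ => ?_
        rw [mul_pow, Real.sq_sqrt hw0]
      have h3 : (∑ k, (C.Λ i (C.S t ω) k - C.Λ i D.s k) ^ 2) ≤ c * (C.h n) ^ 2 := by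
        have hterm : ∀ k : Fin r, (C.Λ i (C.S t ω) k - C.Λ i D.s k) ^ 2
            ≤ CL ^ 2 * R ^ 2 * (C.h n) ^ 2 := by
          intro k
          have h4 : |C.Λ i (C.S t ω) k - C.Λ i D.s k| ≤ CL * (R * C.h n) := by
            refine (hLip i (C.S t ω) D.s k).trans ?_
            exact mul_le_mul_of_nonneg_left habs hCL0
          calc (C.Λ i (C.S t ω) k - C.Λ i D.s k) ^ 2
              = |C.Λ i (C.S t ω) k - C.Λ i D.s k| ^ 2 := (sq_abs _).symm
            _ ≤ (CL * (R * C.h n)) ^ 2 := by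
                apply pow_le_pow_left₀ (abs_nonneg _) h4
            _ = CL ^ 2 * R ^ 2 * (C.h n) ^ 2 := by ring
        calc (∑ k, (C.Λ i (C.S t ω) k - C.Λ i D.s k) ^ 2)
            ≤ Finset.univ.card • (CL ^ 2 * R ^ 2 * (C.h n) ^ 2) :=
              Finset.sum_le_card_nsmul _ _ _ (fun k _ => hterm k)
          _ = c * (C.h n) ^ 2 := by
              simp [hcdef, Finset.card_univ, nsmul_eq_mul]; ring
      refine hCS.trans ?_
      rw [h2]
      have h5 : 0 ≤ w * ∑ k, (C.F t ω k) ^ 2 :=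
        mul_nonneg hw0 (Finset.sum_nonneg fun k _ => sq_nonneg _)
      exact mul_le_mul_of_nonneg_right h3 h5
  constructor
  · -- part 1 : O_p(h) for each t
    intro t
    intro ε hε
    set g : Ω → ℝ := fun ω => ∑ k, (C.F t ω k) ^ 2 with hgdef
    have hgmeas : Measurable g := by
      apply Finset.measurable_sum
      intro k _
      exact (hFmeas t k).pow_const 2
    have hg0 : ∀ ω, 0 ≤ g ω := fun ω => Finset.sum_nonneg fun k _ => sq_nonneg _
    obtain ⟨M0, hM0⟩ := tail_small C.μ g hgmeas hε
    set M1 : ℝ := max M0 1 with hM1def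
    have hM1pos : 0 < M1 := lt_of_lt_of_le one_pos (le_max_right _ _)
    set c1 : ℝ := c * Kmax + 1 with hc1def
    have hc1pos : 0 < c1 := by positivity
    refine ⟨c1 * M1, Filter.Eventually.of_forall fun n => ?_⟩
    have hZ0 : ∀ ω, 0 ≤ (C.N n : ℝ)⁻¹ *
        ∑ i ∈ Finset.range (C.N n), (C.ΔXs D.s n i t ω) ^ 2 :=
      fun ω => mul_nonneg (inv_nonneg.2 (Nat.cast_nonneg _))
        (Finset.sum_nonneg fun i _ => sq_nonneg _)
    have hsub : {ω | c1 * M1 * |C.h n| <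
        |(C.N n : ℝ)⁻¹ * ∑ i ∈ Finset.range (C.N n), (C.ΔXs D.s n i t ω) ^ 2|}
        ⊆ {ω | M0 < g ω} := by
      intro ω hω
      simp only [Set.mem_setOf_eq] at hω ⊢
      rw [abs_of_nonneg (hZ0 ω), abs_of_pos (hhpos n)] at hω
      -- bound Z ≤ c1 * h n * g ω
      have hbi : ∀ i, (C.ΔXs D.s n i t ω) ^ 2 ≤ c1 * (C.h n * g ω) := by
        intro i
        refine (hkey n i t ω).trans ?_
        have hKwle : C.Kw D.s n t ω ≤ (C.h n)⁻¹ * Kmax :=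
          mul_le_mul_of_nonneg_left (hKle _) (inv_nonneg.2 (hhpos n).le)
        have h6 : C.Kw D.s n t ω * g ω ≤ (C.h n)⁻¹ * Kmax * g ω :=
          mul_le_mul_of_nonneg_right hKwle (hg0 ω)
        calc c * (C.h n) ^ 2 * (C.Kw D.s n t ω * g ω)
            ≤ c * (C.h n) ^ 2 * ((C.h n)⁻¹ * Kmax * g ω) := by
              exact mul_le_mul_of_nonneg_left h6 (by positivity)
          _ = c * Kmax * (C.h n * g ω) := by
              field_simp [(hhpos n).ne']
          _ ≤ c1 * (C.h n * g ω) := by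
              refine mul_le_mul_of_nonneg_right ?_
                (mul_nonneg (hhpos n).le (hg0 ω))
              rw [hc1def]; linarith
      have hZle : (C.N n : ℝ)⁻¹ * ∑ i ∈ Finset.range (C.N n), (C.ΔXs D.s n i t ω) ^ 2
          ≤ c1 * (C.h n * g ω) := by
        rcases Nat.eq_zero_or_pos (C.N n) with hN | hN
        · simp only [hN, Finset.range_zero, Finset.sum_empty, mul_zero]
          exact mul_nonneg hc1pos.le (mul_nonneg (hhpos n).le (hg0 ω))
        · have hsum : ∑ i ∈ Finset.range (C.N n), (C.ΔXs D.s n i t ω) ^ 2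
              ≤ (Finset.range (C.N n)).card • (c1 * (C.h n * g ω)) :=
            Finset.sum_le_card_nsmul _ _ _ (fun i _ => hbi i)
          rw [Finset.card_range, nsmul_eq_mul] at hsum
          have hNpos : (0 : ℝ) < (C.N n : ℝ) := by exact_mod_cast hN
          calc (C.N n : ℝ)⁻¹ * ∑ i ∈ Finset.range (C.N n), (C.ΔXs D.s n i t ω) ^ 2
              ≤ (C.N n : ℝ)⁻¹ * ((C.N n : ℝ) * (c1 * (C.h n * g ω))) :=
                mul_le_mul_of_nonneg_left hsum (inv_nonneg.2 hNpos.le)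
            _ = c1 * (C.h n * g ω) := by field_simp
      have h7 : c1 * M1 * C.h n < c1 * (C.h n * g ω) := lt_of_lt_of_le hω hZle
      have h8 : M1 < g ω := by
        have hd : 0 < c1 * C.h n := mul_pos hc1pos (hhpos n)
        nlinarith
      exact lt_of_le_of_lt (le_max_left _ _) h8
    calc (C.μ {ω | c1 * M1 * |C.h n| <
          |(C.N n : ℝ)⁻¹ * ∑ i ∈ Finset.range (C.N n), (C.ΔXs D.s n i t ω) ^ 2|}).toReal
        ≤ (C.μ {ω | M0 < g ω}).toReal :=
          ENNReal.toReal_mono (measure_ne_top _ _) (measure_mono hsub)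
      _ < ε := hM0
  · -- part 2 : O_p(h²) for each i
    intro i
    intro ε hε
    obtain ⟨-, hW, -⟩ := hA3
    set W : ℕ → Fin r → Ω → ℝ := fun n k ω => (C.Ts D.s n ω)⁻¹ *
      ∑ t ∈ Finset.range (C.T n), C.Kw D.s n t ω * C.F t ω k * C.F t ω k with hWdef
    set L : ℝ := ∑ k, D.SigFs k k with hLdef
    set M : ℝ := c * (L + r) + 1 with hMdef
    have hεr : (0 : ℝ) < ε / (r + 1) := by positivity
    have hev : ∀ᶠ n in atTop, ∀ k : Fin r,
        (C.μ {ω | 1 ≤ |W n k ω - D.SigFs k k|}).toReal < ε / (r + 1) := by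
      rw [eventually_all]
      intro k
      exact (hW k k 1 one_pos).eventually_lt_const hεr
    refine ⟨M, ?_⟩
    filter_upwards [hev] with n hn
    have hTs0 : ∀ ω, 0 ≤ (C.Ts D.s n ω)⁻¹ := fun ω =>
      inv_nonneg.2 (Finset.sum_nonneg fun t _ => hKw0 n t ω)
    have hZ0 : ∀ ω, 0 ≤ (C.Ts D.s n ω)⁻¹ *
        ∑ t ∈ Finset.range (C.T n), (C.ΔXs D.s n i t ω) ^ 2 :=
      fun ω => mul_nonneg (hTs0 ω) (Finset.sum_nonneg fun t _ => sq_nonneg _)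
    have hsub : {ω | M * |(C.h n) ^ 2| <
        |(C.Ts D.s n ω)⁻¹ * ∑ t ∈ Finset.range (C.T n), (C.ΔXs D.s n i t ω) ^ 2|}
        ⊆ ⋃ k : Fin r, {ω | 1 ≤ |W n k ω - D.SigFs k k|} := by
      intro ω hω
      simp only [Set.mem_setOf_eq] at hω
      rw [abs_of_nonneg (hZ0 ω), abs_of_nonneg (sq_nonneg _)] at hω
      by_contra hc'
      simp only [Set.mem_iUnion, Set.mem_setOf_eq, not_exists, not_le] at hc'
      -- all W n k ω are close to SigFs k k
      have hWk : ∀ k : Fin r, W n k ω ≤ D.SigFs k k + 1 := by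
        intro k
        have := hc' k
        have := abs_lt.1 this
        linarith [this.2]
      have hsumW : (∑ k, W n k ω) ≤ L + r := by
        calc (∑ k, W n k ω) ≤ ∑ k, (D.SigFs k k + 1) :=
              Finset.sum_le_sum fun k _ => hWk k
          _ = L + r := by
              rw [Finset.sum_add_distrib]
              simp [hLdef, Finset.card_univ]
      -- Z ≤ c * h² * Σ_k W k
      have hZle : (C.Ts D.s n ω)⁻¹ * ∑ t ∈ Finset.range (C.T n), (C.ΔXs D.s n i t ω) ^ 2
          ≤ c * (C.h n) ^ 2 * ∑ k, W n k ω := by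
        have hsum1 : ∑ t ∈ Finset.range (C.T n), (C.ΔXs D.s n i t ω) ^ 2
            ≤ ∑ t ∈ Finset.range (C.T n),
              c * (C.h n) ^ 2 * (C.Kw D.s n t ω * ∑ k, (C.F t ω k) ^ 2) :=
          Finset.sum_le_sum fun t _ => hkey n i t ω
        have hW_eq : (∑ k, W n k ω) = (C.Ts D.s n ω)⁻¹ *
            ∑ t ∈ Finset.range (C.T n), C.Kw D.s n t ω * ∑ k, (C.F t ω k) ^ 2 := by
          simp only [hWdef]
          rw [← Finset.mul_sum, Finset.sum_comm]
          congr 1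
          refine Finset.sum_congr rfl fun t _ => ?_
          rw [Finset.mul_sum]
          refine Finset.sum_congr rfl fun k _ => ?_
          ring
        calc (C.Ts D.s n ω)⁻¹ * ∑ t ∈ Finset.range (C.T n), (C.ΔXs D.s n i t ω) ^ 2
            ≤ (C.Ts D.s n ω)⁻¹ * ∑ t ∈ Finset.range (C.T n),
                c * (C.h n) ^ 2 * (C.Kw D.s n t ω * ∑ k, (C.F t ω k) ^ 2) :=
              mul_le_mul_of_nonneg_left hsum1 (hTs0 ω)
          _ = c * (C.h n) ^ 2 * ((C.Ts D.s n ω)⁻¹ *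
                ∑ t ∈ Finset.range (C.T n), C.Kw D.s n t ω * ∑ k, (C.F t ω k) ^ 2) := by
              rw [← Finset.mul_sum]
              ring
          _ = c * (C.h n) ^ 2 * ∑ k, W n k ω := by rw [hW_eq]
      have hZle2 : (C.Ts D.s n ω)⁻¹ * ∑ t ∈ Finset.range (C.T n), (C.ΔXs D.s n i t ω) ^ 2
          ≤ c * (L + r) * (C.h n) ^ 2 := by
        calc (C.Ts D.s n ω)⁻¹ * ∑ t ∈ Finset.range (C.T n), (C.ΔXs D.s n i t ω) ^ 2
            ≤ c * (C.h n) ^ 2 * ∑ k, W n k ω := hZle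
          _ ≤ c * (C.h n) ^ 2 * (L + r) :=
              mul_le_mul_of_nonneg_left hsumW (by positivity)
          _ = c * (L + r) * (C.h n) ^ 2 := by ring
      have hhsq : 0 < (C.h n) ^ 2 := pow_pos (hhpos n) 2
      have : M * (C.h n) ^ 2 < c * (L + r) * (C.h n) ^ 2 := lt_of_lt_of_le hω hZle2
      rw [hMdef] at this
      nlinarith
    have hle1 : (C.μ {ω | M * |(C.h n) ^ 2| <
        |(C.Ts D.s n ω)⁻¹ * ∑ t ∈ Finset.range (C.T n), (C.ΔXs D.s n i t ω) ^ 2|}).toReal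
        ≤ ∑ k : Fin r, (C.μ {ω | 1 ≤ |W n k ω - D.SigFs k k|}).toReal := by
      have h1 : C.μ {ω | M * |(C.h n) ^ 2| <
          |(C.Ts D.s n ω)⁻¹ * ∑ t ∈ Finset.range (C.T n), (C.ΔXs D.s n i t ω) ^ 2|}
          ≤ ∑ k : Fin r, C.μ {ω | 1 ≤ |W n k ω - D.SigFs k k|} :=
        (measure_mono hsub).trans (measure_iUnion_fintype_le _ _)
      calc (C.μ {ω | M * |(C.h n) ^ 2| <
            |(C.Ts D.s n ω)⁻¹ * ∑ t ∈ Finset.range (C.T n), (C.ΔXs D.s n i t ω) ^ 2|}).toReal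
          ≤ (∑ k : Fin r, C.μ {ω | 1 ≤ |W n k ω - D.SigFs k k|}).toReal :=
            ENNReal.toReal_mono (ENNReal.sum_ne_top.2 fun k _ => measure_ne_top _ _) h1
        _ = ∑ k : Fin r, (C.μ {ω | 1 ≤ |W n k ω - D.SigFs k k|}).toReal :=
            ENNReal.toReal_sum fun k _ => measure_ne_top _ _
    refine lt_of_le_of_lt hle1 ?_
    have h2 : (∑ k : Fin r, (C.μ {ω | 1 ≤ |W n k ω - D.SigFs k k|}).toReal)
        ≤ (r : ℝ) * (ε / (r + 1)) := by
      have := Finset.sum_le_card_nsmul Finset.univ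
        (fun k : Fin r => (C.μ {ω | 1 ≤ |W n k ω - D.SigFs k k|}).toReal)
        (ε / (r + 1)) (fun k _ => (hn k).le)
      simpa [Finset.card_univ, nsmul_eq_mul] using this
    refine lt_of_le_of_lt h2 ?_
    have hr1 : (0 : ℝ) < (r : ℝ) + 1 := by positivity
    calc (r : ℝ) * (ε / (r + 1)) < ((r : ℝ) + 1) * (ε / (r + 1)) :=
          mul_lt_mul_of_pos_right (by linarith) hεr
      _ = ε := by field_simp

end SVFM
end
end

section
/- Upper bound for the total generalized correlation (Lemma A.2). Let Λ₁ ∈ ℝ^{N×k₁} and Λ₂ ∈ ℝ^{N×k₂} with N ≥ max(k₁, k₂), rank(Λ₁) = k₁ and rank(Λ₂) = k₂, and let k = min(k₁, k₂). Then ρ = trace{(Λ₁ᵀΛ₁)⁻¹(Λ₁ᵀΛ₂)(Λ₂ᵀΛ₂)⁻¹(Λ₂ᵀΛ₁)} ≤ k. -/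
open Matrix

noncomputable section

/-- the total generalized correlation of two full-column-rank loading matrices
`ρ(Λ₁,Λ₂) = trace{(Λ₁ᵀΛ₁)⁻¹(Λ₁ᵀΛ₂)(Λ₂ᵀΛ₂)⁻¹(Λ₂ᵀΛ₁)}` (the normalizations `1/N` of the
Gram matrices cancel). -/
def genCorr {N k₁ k₂ : ℕ} (Λ₁ : Matrix (Fin N) (Fin k₁) ℝ)
    (Λ₂ : Matrix (Fin N) (Fin k₂) ℝ) : ℝ :=
  Matrix.trace ((Λ₁ᵀ * Λ₁)⁻¹ * (Λ₁ᵀ * Λ₂) * (Λ₂ᵀ * Λ₂)⁻¹ * (Λ₂ᵀ * Λ₁))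

/-- A square real matrix of full rank is a unit. -/
lemma aux_isUnit_of_rank_eq {k : ℕ} (G : Matrix (Fin k) (Fin k) ℝ) (h : G.rank = k) :
    IsUnit G := by
  rw [← Matrix.mulVec_surjective_iff_isUnit]
  rw [Matrix.rank] at h
  have htop : LinearMap.range G.mulVecLin = ⊤ :=
    Submodule.eq_top_of_finrank_eq (by simpa using h)
  intro y
  obtain ⟨x, hx⟩ := htop ▸ Submodule.mem_top (x := y) (R := ℝ)
  exact ⟨x, hx⟩

/-- The Gram matrix of a full-column-rank matrix is a unit. -/
lemma aux_gram_isUnit {N k : ℕ} (Λ : Matrix (Fin N) (Fin k) ℝ) (h : Λ.rank = k) :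
    IsUnit (Λᵀ * Λ) :=
  aux_isUnit_of_rank_eq _ (by rw [Matrix.rank_transpose_mul_self, h])

lemma aux_trace_transpose_mul_self_nonneg {n m : ℕ} (A : Matrix (Fin n) (Fin m) ℝ) :
    0 ≤ Matrix.trace (Aᵀ * A) := by
  rw [Matrix.trace]
  refine Finset.sum_nonneg fun i _ => ?_
  rw [Matrix.diag_apply, Matrix.mul_apply]
  exact Finset.sum_nonneg fun j _ => by
    simpa [Matrix.transpose_apply] using mul_self_nonneg (A j i)

/-- For symmetric idempotent (projection) matrices `P, Q`,
`trace (P * Q) ≤ trace Q`. -/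
lemma aux_trace_proj_mul_le {n : ℕ} (P Q : Matrix (Fin n) (Fin n) ℝ)
    (hPs : Pᵀ = P) (hPi : P * P = P) (hQs : Qᵀ = Q) (hQi : Q * Q = Q) :
    Matrix.trace (P * Q) ≤ Matrix.trace Q := by
  have key : 0 ≤ Matrix.trace ((Q * (1 - P))ᵀ * (Q * (1 - P))) :=
    aux_trace_transpose_mul_self_nonneg _
  have h1 : ((1 : Matrix (Fin n) (Fin n) ℝ) - P) * (1 - P) = 1 - P := by
    simp only [sub_mul, mul_sub, one_mul, mul_one, hPi]
    abel
  have hexp : (Q * (1 - P))ᵀ * (Q * (1 - P)) = (1 - P) * (Q * (1 - P)) := by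
    rw [Matrix.transpose_mul, Matrix.transpose_sub, Matrix.transpose_one, hPs, hQs,
      Matrix.mul_assoc, ← Matrix.mul_assoc Q Q (1 - P), hQi]
  rw [hexp, Matrix.trace_mul_comm, Matrix.mul_assoc, h1, Matrix.mul_sub, mul_one,
    Matrix.trace_sub, Matrix.trace_mul_comm Q P] at key
  linarith

/-- **Statement 10** (Lemma A.2): if `Λ₁ ∈ ℝ^{N×k₁}` and `Λ₂ ∈ ℝ^{N×k₂}` have full column
rank with `N ≥ max(k₁,k₂)`, then the total generalized correlation is at most
`k = min(k₁,k₂)`. -/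
theorem genCorr_le_min {N k₁ k₂ : ℕ} (hN : max k₁ k₂ ≤ N)
    (Λ₁ : Matrix (Fin N) (Fin k₁) ℝ) (Λ₂ : Matrix (Fin N) (Fin k₂) ℝ)
    (h₁ : Λ₁.rank = k₁) (h₂ : Λ₂.rank = k₂) :
    genCorr Λ₁ Λ₂ ≤ (min k₁ k₂ : ℕ) := by
  have hG₁ := aux_gram_isUnit Λ₁ h₁
  have hG₂ := aux_gram_isUnit Λ₂ h₂
  have hd₁ : IsUnit (Λ₁ᵀ * Λ₁).det := (Matrix.isUnit_iff_isUnit_det _).mp hG₁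
  have hd₂ : IsUnit (Λ₂ᵀ * Λ₂).det := (Matrix.isUnit_iff_isUnit_det _).mp hG₂
  set P₁ : Matrix (Fin N) (Fin N) ℝ := Λ₁ * (Λ₁ᵀ * Λ₁)⁻¹ * Λ₁ᵀ with hP₁def
  set P₂ : Matrix (Fin N) (Fin N) ℝ := Λ₂ * (Λ₂ᵀ * Λ₂)⁻¹ * Λ₂ᵀ with hP₂def
  -- transpose-symmetry of the projections
  have hsymG₁ : (Λ₁ᵀ * Λ₁)ᵀ = Λ₁ᵀ * Λ₁ := by
    rw [Matrix.transpose_mul, Matrix.transpose_transpose]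
  have hsymG₂ : (Λ₂ᵀ * Λ₂)ᵀ = Λ₂ᵀ * Λ₂ := by
    rw [Matrix.transpose_mul, Matrix.transpose_transpose]
  have hP₁s : P₁ᵀ = P₁ := by
    rw [hP₁def, Matrix.transpose_mul, Matrix.transpose_mul, Matrix.transpose_transpose,
      Matrix.transpose_nonsing_inv, hsymG₁, Matrix.mul_assoc]
  have hP₂s : P₂ᵀ = P₂ := by
    rw [hP₂def, Matrix.transpose_mul, Matrix.transpose_mul, Matrix.transpose_transpose,
      Matrix.transpose_nonsing_inv, hsymG₂, Matrix.mul_assoc]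
  -- idempotency
  have hP₁i : P₁ * P₁ = P₁ := by
    rw [hP₁def]
    simp only [Matrix.mul_assoc]
    rw [← Matrix.mul_assoc Λ₁ᵀ Λ₁ _, ← Matrix.mul_assoc (Λ₁ᵀ * Λ₁) _ _,
      Matrix.mul_nonsing_inv _ hd₁, Matrix.one_mul]
  have hP₂i : P₂ * P₂ = P₂ := by
    rw [hP₂def]
    simp only [Matrix.mul_assoc]
    rw [← Matrix.mul_assoc Λ₂ᵀ Λ₂ _, ← Matrix.mul_assoc (Λ₂ᵀ * Λ₂) _ _,
      Matrix.mul_nonsing_inv _ hd₂, Matrix.one_mul]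
  -- traces of the projections
  have htr₁ : Matrix.trace P₁ = (k₁ : ℝ) := by
    rw [hP₁def, Matrix.trace_mul_comm, ← Matrix.mul_assoc,
      Matrix.mul_nonsing_inv _ hd₁]
    simp [Matrix.trace_one]
  have htr₂ : Matrix.trace P₂ = (k₂ : ℝ) := by
    rw [hP₂def, Matrix.trace_mul_comm, ← Matrix.mul_assoc,
      Matrix.mul_nonsing_inv _ hd₂]
    simp [Matrix.trace_one]
  -- genCorr is trace (P₁ * P₂)
  have hgen : genCorr Λ₁ Λ₂ = Matrix.trace (P₁ * P₂) := by
    rw [genCorr, hP₁def, hP₂def]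
    rw [show (Λ₁ᵀ * Λ₁)⁻¹ * (Λ₁ᵀ * Λ₂) * (Λ₂ᵀ * Λ₂)⁻¹ * (Λ₂ᵀ * Λ₁)
        = ((Λ₁ᵀ * Λ₁)⁻¹ * (Λ₁ᵀ * Λ₂) * (Λ₂ᵀ * Λ₂)⁻¹ * Λ₂ᵀ) * Λ₁ by
      simp only [Matrix.mul_assoc],
      Matrix.trace_mul_comm]
    simp only [Matrix.mul_assoc]
  have le₁ : Matrix.trace (P₁ * P₂) ≤ (k₂ : ℝ) := by
    rw [← htr₂]; exact aux_trace_proj_mul_le P₁ P₂ hP₁s hP₁i hP₂s hP₂i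
  have le₂ : Matrix.trace (P₁ * P₂) ≤ (k₁ : ℝ) := by
    rw [← htr₁, Matrix.trace_mul_comm]
    exact aux_trace_proj_mul_le P₂ P₁ hP₂s hP₂i hP₁s hP₁i
  rw [hgen]
  rcases le_total k₁ k₂ with h | h
  · rw [min_eq_left h]; exact le₂
  · rw [min_eq_right h]; exact le₁
end
end
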